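/- Let 𝒫 be a finite set of n×n row-stochastic matrices, and suppose there exist nonnegative nonzero row vectors Δ_1, Δ_2 with disjoint supports and a sequence P_1,…,P_l of matrices from 𝒫 with l ≥ 2^{2n}, such that the supports of Δ_1 P_1⋯P_t and Δ_2 P_1⋯P_t are disjoint for all t = 1,…,l. Then there exist nonnegative nonzero vectors Δ_1', Δ_2' with disjoint supports and an infinite sequence P_1', P_2', … of matrices from 𝒫 such that the supports of Δ_1' P_1'⋯P_t' and Δ_2' P_1'⋯P_t' are disjoint for every t ≥ 1. -/
import Mathlib


def RowStochastic {n : ℕ} (P : Matrix (Fin n) (Fin n) ℝ) : Prop :=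
  (∀ i j, 0 ≤ P i j) ∧ ∀ i, ∑ j, P i j = 1

/-- `prodRange P t = P 0 * P 1 * ⋯ * P (t-1)`. -/
def prodRange {n : ℕ} (P : ℕ → Matrix (Fin n) (Fin n) ℝ) (t : ℕ) :
    Matrix (Fin n) (Fin n) ℝ :=
  (List.ofFn (fun i : Fin t => P i)).prod

lemma prodRange_zero {n : ℕ} (P : ℕ → Matrix (Fin n) (Fin n) ℝ) :
    prodRange P 0 = 1 := by simp [prodRange]

lemma prodRange_succ {n : ℕ} (P : ℕ → Matrix (Fin n) (Fin n) ℝ) (t : ℕ) :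
    prodRange P (t + 1) = prodRange P t * P t := by
  rw [prodRange, prodRange, List.ofFn_succ', List.prod_concat]
  simp

lemma vecMul_prodRange_succ {n : ℕ} (P : ℕ → Matrix (Fin n) (Fin n) ℝ)
    (v : Fin n → ℝ) (t : ℕ) :
    Matrix.vecMul v (prodRange P (t + 1)) =
      Matrix.vecMul (Matrix.vecMul v (prodRange P t)) (P t) := by
  rw [prodRange_succ, Matrix.vecMul_vecMul]

lemma vecMul_nonneg' {n : ℕ} {v : Fin n → ℝ} {M : Matrix (Fin n) (Fin n) ℝ}
    (hv : ∀ i, 0 ≤ v i) (hM : ∀ i j, 0 ≤ M i j) :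
    ∀ j, 0 ≤ Matrix.vecMul v M j := by
  intro j
  simp only [Matrix.vecMul, dotProduct]
  exact Finset.sum_nonneg fun i _ => mul_nonneg (hv i) (hM i j)

lemma vecMul_eq_zero_iff {n : ℕ} {v : Fin n → ℝ} {M : Matrix (Fin n) (Fin n) ℝ}
    (hv : ∀ i, 0 ≤ v i) (hM : ∀ i j, 0 ≤ M i j) (j : Fin n) :
    Matrix.vecMul v M j = 0 ↔ ∀ i, v i = 0 ∨ M i j = 0 := by
  simp only [Matrix.vecMul, dotProduct]
  rw [Finset.sum_eq_zero_iff_of_nonneg (fun i _ => mul_nonneg (hv i) (hM i j))]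
  simp [mul_eq_zero]

lemma support_vecMul_congr {n : ℕ} {v w : Fin n → ℝ} {M : Matrix (Fin n) (Fin n) ℝ}
    (hv : ∀ i, 0 ≤ v i) (hw : ∀ i, 0 ≤ w i) (hM : ∀ i j, 0 ≤ M i j)
    (h : Function.support v = Function.support w) :
    Function.support (Matrix.vecMul v M) = Function.support (Matrix.vecMul w M) := by
  have hiff : ∀ i, v i = 0 ↔ w i = 0 := by
    intro i
    have := Set.ext_iff.mp h i
    simp only [Function.mem_support] at this
    tauto
  ext j
  simp only [Function.mem_support]
  apply not_congr
  rw [vecMul_eq_zero_iff hv hM, vecMul_eq_zero_iff hw hM]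
  constructor <;> intro hh i <;> rcases hh i with h0 | h0
  · exact Or.inl ((hiff i).mp h0)
  · exact Or.inr h0
  · exact Or.inl ((hiff i).mpr h0)
  · exact Or.inr h0

lemma vecMul_prodRange_nonneg {n : ℕ} {P : ℕ → Matrix (Fin n) (Fin n) ℝ}
    {v : Fin n → ℝ} (hv : ∀ i, 0 ≤ v i) :
    ∀ t, (∀ k < t, ∀ i j, 0 ≤ P k i j) → ∀ j, 0 ≤ Matrix.vecMul v (prodRange P t) j := by
  intro t
  induction t with
  | zero => intro _ j; simpa [prodRange_zero] using hv j
  | succ t ih =>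
    intro hQ j
    rw [vecMul_prodRange_succ]
    exact vecMul_nonneg' (ih fun k hk => hQ k (by omega)) (hQ t (by omega)) j

lemma sum_vecMul {n : ℕ} (v : Fin n → ℝ) {M : Matrix (Fin n) (Fin n) ℝ}
    (hM : RowStochastic M) : ∑ j, Matrix.vecMul v M j = ∑ i, v i := by
  simp only [Matrix.vecMul, dotProduct]
  rw [Finset.sum_comm]
  simp [← Finset.mul_sum, hM.2]

lemma sum_vecMul_prodRange {n : ℕ} (v : Fin n → ℝ) {P : ℕ → Matrix (Fin n) (Fin n) ℝ} :
    ∀ t, (∀ k < t, RowStochastic (P k)) →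
      ∑ j, Matrix.vecMul v (prodRange P t) j = ∑ i, v i := by
  intro t
  induction t with
  | zero => intro _; simp [prodRange_zero]
  | succ t ih =>
    intro hQ
    rw [vecMul_prodRange_succ, sum_vecMul _ (hQ t (by omega))]
    exact ih fun k hk => hQ k (by omega)

lemma loop_support {n : ℕ} {P : ℕ → Matrix (Fin n) (Fin n) ℝ}
    {v : Fin n → ℝ} (hv : ∀ i, 0 ≤ v i) {t₁ d : ℕ} (hd : 0 < d)
    (hQ : ∀ k < t₁ + d, ∀ i j, 0 ≤ P k i j)
    (hloop : Function.support (Matrix.vecMul v (prodRange P (t₁ + d))) =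
             Function.support (Matrix.vecMul v (prodRange P t₁))) :
    ∀ t, Function.support (Matrix.vecMul (Matrix.vecMul v (prodRange P t₁))
            (prodRange (fun k => P (t₁ + k % d)) t)) =
         Function.support (Matrix.vecMul v (prodRange P (t₁ + t % d))) := by
  intro t
  induction t with
  | zero => simp [prodRange_zero, Nat.zero_mod]
  | succ t ih =>
    have hmod : t % d < d := Nat.mod_lt t hd
    have hQ' : ∀ k < t₁, ∀ i j, 0 ≤ P k i j := fun k hk => hQ k (by omega)
    have hLnn : ∀ j, 0 ≤ Matrix.vecMul (Matrix.vecMul v (prodRange P t₁))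
        (prodRange (fun k => P (t₁ + k % d)) t) j :=
      vecMul_prodRange_nonneg (vecMul_prodRange_nonneg hv t₁ hQ') t
        (fun k _ => hQ (t₁ + k % d) (by have := Nat.mod_lt k hd; omega))
    have hRnn : ∀ j, 0 ≤ Matrix.vecMul v (prodRange P (t₁ + t % d)) j :=
      vecMul_prodRange_nonneg hv _ (fun k hk => hQ k (by omega))
    have hMnn : ∀ i j, 0 ≤ P (t₁ + t % d) i j := hQ _ (by omega)
    rw [vecMul_prodRange_succ]
    have step := support_vecMul_congr hLnn hRnn hMnn ih
    rw [step, ← vecMul_prodRange_succ]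
    rcases Nat.lt_or_ge (t % d + 1) d with h | h
    · have : (t + 1) % d = t % d + 1 := by
        rw [Nat.add_mod, Nat.mod_eq_of_lt (show 1 < d by omega),
          Nat.mod_eq_of_lt h]
      rw [this, ← Nat.add_assoc]
    · have he : t % d + 1 = d := by omega
      have h0 : (t + 1) % d = 0 := by
        have : (t + 1) % d = (t % d + 1 % d) % d := Nat.add_mod t 1 d
        rcases Nat.lt_or_ge 1 d with h1 | h1
        · rw [this, Nat.mod_eq_of_lt h1, he, Nat.mod_self]
        · have hd1 : d = 1 := by omega
          subst hd1; omega
      rw [h0, show t₁ + t % d + 1 = t₁ + d by omega, hloop, Nat.add_zero]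

theorem disjoint_supports_extend_to_infinite {n : ℕ}
    (Pset : Set (Matrix (Fin n) (Fin n) ℝ)) (hfin : Pset.Finite)
    (hstoch : ∀ M ∈ Pset, RowStochastic M)
    (Δ₁ Δ₂ : Fin n → ℝ) (hΔ₁ : ∀ i, 0 ≤ Δ₁ i) (hΔ₂ : ∀ i, 0 ≤ Δ₂ i)
    (hne₁ : Δ₁ ≠ 0) (hne₂ : Δ₂ ≠ 0)
    (hdisj : Disjoint (Function.support Δ₁) (Function.support Δ₂))
    (l : ℕ) (hl : 2 ^ (2 * n) ≤ l)
    (P : ℕ → Matrix (Fin n) (Fin n) ℝ) (hP : ∀ i < l, P i ∈ Pset)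
    (hdisjprod : ∀ t, 1 ≤ t → t ≤ l →
      Disjoint (Function.support (Matrix.vecMul Δ₁ (prodRange P t)))
               (Function.support (Matrix.vecMul Δ₂ (prodRange P t)))) :
    ∃ (Δ₁' Δ₂' : Fin n → ℝ) (P' : ℕ → Matrix (Fin n) (Fin n) ℝ),
      (∀ i, 0 ≤ Δ₁' i) ∧ (∀ i, 0 ≤ Δ₂' i) ∧ Δ₁' ≠ 0 ∧ Δ₂' ≠ 0 ∧
      Disjoint (Function.support Δ₁') (Function.support Δ₂') ∧
      (∀ i, P' i ∈ Pset) ∧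
      ∀ t, 1 ≤ t →
        Disjoint (Function.support (Matrix.vecMul Δ₁' (prodRange P' t)))
                 (Function.support (Matrix.vecMul Δ₂' (prodRange P' t))) := by
  classical
  -- Pigeonhole: find two times with the same pair of supports
  obtain ⟨t₁, t₂, hlt, ht₂l, hs₁, hs₂⟩ :
      ∃ t₁ t₂ : ℕ, t₁ < t₂ ∧ t₂ ≤ l ∧
        Function.support (Matrix.vecMul Δ₁ (prodRange P t₂)) =
          Function.support (Matrix.vecMul Δ₁ (prodRange P t₁)) ∧
        Function.support (Matrix.vecMul Δ₂ (prodRange P t₂)) =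
          Function.support (Matrix.vecMul Δ₂ (prodRange P t₁)) := by
    set F : Fin (l + 1) → ((Fin n → Bool) × (Fin n → Bool)) := fun t =>
      (fun i => decide (Matrix.vecMul Δ₁ (prodRange P t) i ≠ 0),
       fun i => decide (Matrix.vecMul Δ₂ (prodRange P t) i ≠ 0)) with hF
    have hcard : Fintype.card ((Fin n → Bool) × (Fin n → Bool)) <
        Fintype.card (Fin (l + 1)) := by
      simp only [Fintype.card_prod, Fintype.card_fun, Fintype.card_bool,
        Fintype.card_fin]
      calc 2 ^ n * 2 ^ n = 2 ^ (2 * n) := by ring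
        _ < l + 1 := by omega
    obtain ⟨a, b, hab, hFab⟩ := Fintype.exists_ne_map_eq_of_card_lt F hcard
    have key : ∀ (a b : Fin (l + 1)), F a = F b →
        Function.support (Matrix.vecMul Δ₁ (prodRange P a)) =
          Function.support (Matrix.vecMul Δ₁ (prodRange P b)) ∧
        Function.support (Matrix.vecMul Δ₂ (prodRange P a)) =
          Function.support (Matrix.vecMul Δ₂ (prodRange P b)) := by
      intro a b h
      constructor <;> ext i <;> simp only [Function.mem_support]
      · exact decide_eq_decide.mp (congrFun (congrArg Prod.fst h) i)
      · exact decide_eq_decide.mp (congrFun (congrArg Prod.snd h) i)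
    rcases hab.lt_or_gt with h | h
    · obtain ⟨e1, e2⟩ := key b a hFab.symm
      exact ⟨a, b, h, Nat.lt_succ_iff.mp b.isLt, e1, e2⟩
    · obtain ⟨e1, e2⟩ := key a b hFab
      exact ⟨b, a, h, Nat.lt_succ_iff.mp a.isLt, e1, e2⟩
  set d : ℕ := t₂ - t₁ with hdd
  have hd : 0 < d := by omega
  have ht₂ : t₂ = t₁ + d := by omega
  have hQ : ∀ k < t₁ + d, ∀ i j, 0 ≤ P k i j := fun k hk =>
    (hstoch _ (hP k (by omega))).1
  have hQ' : ∀ k < t₁, ∀ i j, 0 ≤ P k i j := fun k hk => hQ k (by omega)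
  have hQst : ∀ k < t₁, RowStochastic (P k) := fun k hk =>
    hstoch _ (hP k (by omega))
  refine ⟨Matrix.vecMul Δ₁ (prodRange P t₁), Matrix.vecMul Δ₂ (prodRange P t₁),
    fun k => P (t₁ + k % d), vecMul_prodRange_nonneg hΔ₁ t₁ hQ',
    vecMul_prodRange_nonneg hΔ₂ t₁ hQ', ?_, ?_, ?_, ?_, ?_⟩
  · -- Δ₁' ≠ 0
    intro h0
    have hsum := sum_vecMul_prodRange Δ₁ t₁ hQst
    rw [h0] at hsum
    simp only [Pi.zero_apply, Finset.sum_const_zero] at hsum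
    obtain ⟨i₀, hi₀⟩ := Function.ne_iff.mp hne₁
    have : 0 < ∑ i, Δ₁ i :=
      Finset.sum_pos' (fun i _ => hΔ₁ i)
        ⟨i₀, Finset.mem_univ _, lt_of_le_of_ne (hΔ₁ i₀) (Ne.symm hi₀)⟩
    linarith
  · intro h0
    have hsum := sum_vecMul_prodRange Δ₂ t₁ hQst
    rw [h0] at hsum
    simp only [Pi.zero_apply, Finset.sum_const_zero] at hsum
    obtain ⟨i₀, hi₀⟩ := Function.ne_iff.mp hne₂
    have : 0 < ∑ i, Δ₂ i :=
      Finset.sum_pos' (fun i _ => hΔ₂ i)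
        ⟨i₀, Finset.mem_univ _, lt_of_le_of_ne (hΔ₂ i₀) (Ne.symm hi₀)⟩
    linarith
  · -- disjoint supports at time t₁
    rcases Nat.eq_zero_or_pos t₁ with h0 | h0
    · subst h0
      simpa [prodRange_zero, Matrix.vecMul_one] using hdisj
    · exact hdisjprod t₁ h0 (by omega)
  · exact fun k => hP _ (by have := Nat.mod_lt k hd; omega)
  · intro t ht
    rw [loop_support hΔ₁ hd hQ (by rw [← ht₂]; exact hs₁) t,
      loop_support hΔ₂ hd hQ (by rw [← ht₂]; exact hs₂) t]
    have hmod : t % d < d := Nat.mod_lt t hd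
    rcases Nat.eq_zero_or_pos (t₁ + t % d) with h0 | h0
    · rw [h0]
      simpa [prodRange_zero, Matrix.vecMul_one] using hdisj
    · exact hdisjprod _ h0 (by omega)
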